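/- arXiv:1509.04276 — 2 statements merged into one kernel-verified Lean document; each statement's English description precedes it below -/
import Mathlib

section
/- Let U ⊆ ℝ² be a connected open set, Γ a torsion-free affine connection on U with projective Schouten tensor P, and Υ a smooth one-form on U. Define the projectively changed connection Γ̂^k_{ij} = Γ^k_{ij} + δ^k_i Υ_j + δ^k_j Υ_i, and let P̂ be its projective Schouten tensor. On M = U×ℝ² with coordinates (x¹,x²,ξ₁,ξ₂) define the pseudo-Riemannian metric g by g(∂_{ξ_i},∂_{x^j}) = g(∂_{x^j},∂_{ξ_i}) = ½δ_{ij}, g(∂_{x^i},∂_{x^j}) = −Σ_k Γ^k_{ij}ξ_k + ξ_iξ_j + P_{(ij)}, g(∂_{ξ_i},∂_{ξ_j}) = 0, and define ĝ by the same formulas with Γ̂ and P̂ in place of Γ and P. Then the diffeomorphism Φ : U×ℝ² → U×ℝ², Φ(x,ξ) = (x, ξ + Υ(x)), pulls ĝ back to g: for every p ∈ U×ℝ², (DΦ(p))ᵀ · ĝ(Φ(p)) · DΦ(p) = g(p), where the metrics are viewed as symmetric 4×4 matrix-valued functions in the coordinate order (x¹,x²,ξ₁,ξ₂). In other words, the metric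 of the Einstein lift does not depend on the choice of connection in the projective class. -/
noncomputable section
open Matrix

/-- Points of the plane. -/
abbrev Pt2 : Type := Fin 2 → ℝ
/-- Points of the 4-manifold `U × ℝ²`, coordinates `(x¹, x², ξ₁, ξ₂)`. -/
abbrev Pt4 : Type := Fin 4 → ℝ

/-- Partial derivative of a function on the plane. -/
def pd2 (i : Fin 2) (f : Pt2 → ℝ) (x : Pt2) : ℝ := fderiv ℝ f x (Pi.single i 1)

/-- Base point `(x¹,x²)` of a point of `U × ℝ²`. -/
def bpt (p : Pt4) : Pt2 := ![p 0, p 1]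
/-- Fibre coordinates `(ξ₁,ξ₂)` of a point of `U × ℝ²`. -/
def fib (p : Pt4) : Fin 2 → ℝ := ![p 2, p 3]

/-- An affine connection: `conn k i j` is the Christoffel symbol `Γ^k_{ij}`. -/
abbrev Conn : Type := Fin 2 → Fin 2 → Fin 2 → Pt2 → ℝ

/-- Curvature `R_{ij}{}^k{}_l` of a connection. -/
def curv (Γ : Conn) (i j k l : Fin 2) (x : Pt2) : ℝ :=
  pd2 i (Γ k j l) x - pd2 j (Γ k i l) x
    + ∑ m, (Γ k i m x * Γ m j l x - Γ k j m x * Γ m i l x)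

/-- Ricci tensor `R_{jl} = R_{kj}{}^k{}_l`. -/
def ricciT (Γ : Conn) (j l : Fin 2) (x : Pt2) : ℝ := ∑ k, curv Γ k j k l x

/-- Projective Schouten tensor `P_{ij} = R_{(ij)} + (1/3) R_{[ij]}`. -/
def schouten (Γ : Conn) (i j : Fin 2) (x : Pt2) : ℝ :=
  (ricciT Γ i j x + ricciT Γ j i x) / 2 + (ricciT Γ i j x - ricciT Γ j i x) / 6

/-- The projectively changed connection `Γ̂^k_{ij} = Γ^k_{ij} + δ^k_i Υ_j + δ^k_j Υ_i`. -/
def projChange (Γ : Conn) (Υ : Fin 2 → Pt2 → ℝ) : Conn :=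
  fun k i j x => Γ k i j x + (if k = i then Υ j x else 0) + (if k = j then Υ i x else 0)

/-- The Einstein lift metric (with `Λ = 1`) of a connection `Γ`, as a symmetric
`4×4` matrix in the coordinates `(x¹,x²,ξ₁,ξ₂)`:
`g(∂_{ξ_i},∂_{x^j}) = ½δ_{ij}`, `g(∂_{x^i},∂_{x^j}) = −Σ_k Γ^k_{ij}ξ_k + ξ_iξ_j + P_{(ij)}`,
`g(∂_{ξ_i},∂_{ξ_j}) = 0`. -/
def einsteinLift (Γ : Conn) (p : Pt4) : Matrix (Fin 4) (Fin 4) ℝ :=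
  let A : Fin 2 → Fin 2 → ℝ := fun i j =>
    -(∑ k, Γ k i j (bpt p) * fib p k) + fib p i * fib p j
      + (schouten Γ i j (bpt p) + schouten Γ j i (bpt p)) / 2
  !![A 0 0, A 0 1, 1/2, 0;
     A 1 0, A 1 1, 0, 1/2;
     1/2, 0, 0, 0;
     0, 1/2, 0, 0]

/-- The diffeomorphism `Φ(x,ξ) = (x, ξ + Υ(x))`. -/
def transl (Υ : Fin 2 → Pt2 → ℝ) (p : Pt4) : Pt4 :=
  ![p 0, p 1, p 2 + Υ 0 (bpt p), p 3 + Υ 1 (bpt p)]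

/-- The Jacobian matrix `DΦ` of `Φ(x,ξ) = (x, ξ + Υ(x))`, in coordinates `(x¹,x²,ξ₁,ξ₂)`. -/
def translD (Υ : Fin 2 → Pt2 → ℝ) (p : Pt4) : Matrix (Fin 4) (Fin 4) ℝ :=
  !![1, 0, 0, 0;
     0, 1, 0, 0;
     pd2 0 (Υ 0) (bpt p), pd2 1 (Υ 0) (bpt p), 1, 0;
     pd2 0 (Υ 1) (bpt p), pd2 1 (Υ 1) (bpt p), 0, 1]


lemma pd2_projChange (Γ : Conn) (Υ : Fin 2 → Pt2 → ℝ) (x : Pt2)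
    (hΓ : ∀ k a b, DifferentiableAt ℝ (Γ k a b) x)
    (hΥ : ∀ i, DifferentiableAt ℝ (Υ i) x) (i k a b : Fin 2) :
    pd2 i (projChange Γ Υ k a b) x
      = pd2 i (Γ k a b) x + (if k = a then 1 else 0) * pd2 i (Υ b) x
        + (if k = b then 1 else 0) * pd2 i (Υ a) x := by
  have h : projChange Γ Υ k a b = fun y =>
      Γ k a b y + (if k = a then (1:ℝ) else 0) * Υ b y
        + (if k = b then (1:ℝ) else 0) * Υ a y := by
    funext y; simp only [projChange]; split_ifs <;> ring
  rw [h]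
  unfold pd2
  rw [fderiv_fun_add (f := fun y => Γ k a b y + (if k = a then (1:ℝ) else 0) * Υ b y)
        (((hΓ k a b).add ((hΥ b).const_mul _))) ((hΥ a).const_mul _),
      fderiv_fun_add (hΓ k a b) ((hΥ b).const_mul _),
      fderiv_const_mul (hΥ b), fderiv_const_mul (hΥ a)]
  split_ifs <;> simp

set_option maxHeartbeats 2000000 in
lemma keyA (Γ : Conn) (Υ : Fin 2 → Pt2 → ℝ) (x : Pt2)
    (hΓ : ∀ k a b, DifferentiableAt ℝ (Γ k a b) x)
    (hΥ : ∀ i, DifferentiableAt ℝ (Υ i) x)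
    (hsym : ∀ k, Γ k 1 0 x = Γ k 0 1 x) (i j : Fin 2) (ξ : Fin 2 → ℝ) :
    -(∑ k, projChange Γ Υ k i j x * (ξ k + Υ k x)) + (ξ i + Υ i x) * (ξ j + Υ j x)
      + (schouten (projChange Γ Υ) i j x + schouten (projChange Γ Υ) j i x) / 2
      + (pd2 i (Υ j) x + pd2 j (Υ i) x) / 2
    = -(∑ k, Γ k i j x * ξ k) + ξ i * ξ j
      + (schouten Γ i j x + schouten Γ j i x) / 2 := by
  have hpd := pd2_projChange Γ Υ x hΓ hΥ
  fin_cases i <;> fin_cases j <;>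
  · simp only [Fin.mk_zero, Fin.mk_one, schouten, ricciT, curv, Fin.sum_univ_two, hpd,
      Fin.isValue]
    simp only [projChange, Fin.mk_zero, Fin.mk_one, Fin.isValue, reduceIte, one_ne_zero,
      zero_ne_one, Fin.zero_eq_one_iff, Fin.one_eq_zero_iff, Nat.succ_ne_self, ite_true,
      ite_false, if_true, if_false]
    simp only [hsym]
    ring

set_option maxHeartbeats 1000000 in
/-- The Einstein-lift metric does not depend on the choice of connection in the
projective class: `Φ(x,ξ) = (x, ξ + Υ(x))` pulls back the lift of the projectively
changed connection to the lift of the original connection. -/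
theorem einsteinLift_projective_invariance
    (U : Set Pt2) (hUopen : IsOpen U) (hUconn : IsConnected U)
    (Γ : Conn) (hΓsmooth : ∀ k i j, ContDiffOn ℝ (⊤ : ℕ∞) (Γ k i j) U)
    (hΓsym : ∀ k i j, ∀ x ∈ U, Γ k i j x = Γ k j i x)
    (Υ : Fin 2 → Pt2 → ℝ) (hΥsmooth : ∀ i, ContDiffOn ℝ (⊤ : ℕ∞) (Υ i) U)
    (p : Pt4) (hp : bpt p ∈ U) :
    (translD Υ p)ᵀ * einsteinLift (projChange Γ Υ) (transl Υ p) * translD Υ p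
      = einsteinLift Γ p := by
  have hb : bpt (transl Υ p) = bpt p := by
    funext i; fin_cases i <;> simp [bpt, transl]
  have hf : ∀ k, fib (transl Υ p) k = fib p k + Υ k (bpt p) := by
    intro k; fin_cases k <;> simp [fib, transl, bpt]
  have hΓd : ∀ k a b, DifferentiableAt ℝ (Γ k a b) (bpt p) := fun k a b =>
    ((hΓsmooth k a b).contDiffAt (hUopen.mem_nhds hp)).differentiableAt (by simp)
  have hΥd : ∀ i, DifferentiableAt ℝ (Υ i) (bpt p) := fun i =>
    ((hΥsmooth i).contDiffAt (hUopen.mem_nhds hp)).differentiableAt (by simp)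
  have hs : ∀ k, Γ k 1 0 (bpt p) = Γ k 0 1 (bpt p) := fun k => hΓsym k 1 0 _ hp
  have hT : (translD Υ p)ᵀ = !![1, 0, pd2 0 (Υ 0) (bpt p), pd2 0 (Υ 1) (bpt p);
      0, 1, pd2 1 (Υ 0) (bpt p), pd2 1 (Υ 1) (bpt p); 0, 0, 1, 0; 0, 0, 0, 1] := by
    ext i j
    fin_cases i <;> fin_cases j <;>
      simp [translD, Matrix.transpose_apply, Matrix.vecHead, Matrix.vecTail]
  rw [hT]
  have key := keyA Γ Υ (bpt p) hΓd hΥd hs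
  simp only [Fin.sum_univ_two] at key
  ext i j
  fin_cases i <;> fin_cases j
  all_goals simp [einsteinLift, translD, hb, hf, Matrix.mul_apply,
      Fin.sum_univ_four, Fin.sum_univ_two, Fin.isValue, Fin.mk_zero, Fin.mk_one,
      Matrix.cons_val_zero, Matrix.cons_val_one, Matrix.head_cons, Matrix.cons_val',
      Matrix.empty_val', Matrix.cons_val_fin_one, Matrix.head_fin_const, Matrix.vecHead,
      Matrix.vecTail]
  · linear_combination key 0 0 (fib p)
  · linear_combination key 0 1 (fib p)
  · linear_combination key 1 0 (fib p)
  · linear_combination key 1 1 (fib p)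
end
end

section
/- Let U ⊆ ℝ² be open, Γ a torsion-free affine connection on U with projective Schouten tensor P, and suppose K is a projective vector field, i.e. there is a smooth one-form ρ on U with (ℒ_K Γ)^k_{ij} = δ^k_i ρ_j + δ^k_j ρ_i for all i,j,k. Then the integrability condition ℒ_K P_{ij} = −(∂_i ρ_j − Σ_k Γ^k_{ij} ρ_k) holds on U, where ℒ_K P_{ij} = Σ_m (K^m ∂_m P_{ij} + P_{mj} ∂_i K^m + P_{im} ∂_j K^m). -/
open Filter Topology


noncomputable section

/-- Lie derivative of a connection along a vector field `K` on the plane: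
`(ℒ_K Γ)^k_{ij} = ∂_i∂_j K^k + Σ_m (K^m ∂_m Γ^k_{ij} − Γ^m_{ij} ∂_m K^k
    + Γ^k_{im} ∂_j K^m + Γ^k_{jm} ∂_i K^m)`. -/
def lieConn (Γ : Conn) (K : Fin 2 → Pt2 → ℝ) (k i j : Fin 2) (x : Pt2) : ℝ :=
  pd2 i (fun y => pd2 j (K k) y) x
    + ∑ m, (K m x * pd2 m (Γ k i j) x - Γ m i j x * pd2 m (K k) x
        + Γ k i m x * pd2 j (K m) x + Γ k j m x * pd2 i (K m) x)

/-- Lie derivative of a covariant 2-tensor on the plane along a vector field `K`: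
`ℒ_K P_{ij} = Σ_m (K^m ∂_m P_{ij} + P_{mj} ∂_i K^m + P_{im} ∂_j K^m)`. -/
def lieTen2 (K : Fin 2 → Pt2 → ℝ) (P : Fin 2 → Fin 2 → Pt2 → ℝ)
    (i j : Fin 2) (x : Pt2) : ℝ :=
  ∑ m, (K m x * pd2 m (P i j) x + P m j x * pd2 i (K m) x + P i m x * pd2 j (K m) x)

-- infrastructure
lemma smooth_pd2 {f : Pt2 → ℝ} {x : Pt2} (i : Fin 2) (hf : ContDiffAt ℝ (⊤ : ℕ∞) f x) :
    ContDiffAt ℝ (⊤ : ℕ∞) (pd2 i f) x := by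
  have h1 : ContDiffAt ℝ (⊤ : ℕ∞) (fderiv ℝ f) x := hf.fderiv_right (by simp)
  exact h1.clm_apply contDiffAt_const

lemma diff_pd2 {f : Pt2 → ℝ} {x : Pt2} (i : Fin 2) (hf : ContDiffAt ℝ (⊤ : ℕ∞) f x) :
    DifferentiableAt ℝ (pd2 i f) x := (smooth_pd2 i hf).differentiableAt (by simp)

lemma pd2_congr {f g : Pt2 → ℝ} {x : Pt2} (i : Fin 2) (h : f =ᶠ[𝓝 x] g) :
    pd2 i f x = pd2 i g x := by unfold pd2; rw [h.fderiv_eq]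

lemma pd2_add {f g : Pt2 → ℝ} {x : Pt2} {i : Fin 2} (hf : DifferentiableAt ℝ f x)
    (hg : DifferentiableAt ℝ g x) :
    pd2 i (fun y => f y + g y) x = pd2 i f x + pd2 i g x := by
  unfold pd2; rw [fderiv_fun_add hf hg]; simp

lemma pd2_sub {f g : Pt2 → ℝ} {x : Pt2} {i : Fin 2} (hf : DifferentiableAt ℝ f x)
    (hg : DifferentiableAt ℝ g x) :
    pd2 i (fun y => f y - g y) x = pd2 i f x - pd2 i g x := by
  unfold pd2; rw [fderiv_fun_sub hf hg]; simp

lemma pd2_mul {f g : Pt2 → ℝ} {x : Pt2} {i : Fin 2} (hf : DifferentiableAt ℝ f x)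
    (hg : DifferentiableAt ℝ g x) :
    pd2 i (fun y => f y * g y) x = pd2 i f x * g x + f x * pd2 i g x := by
  unfold pd2; rw [fderiv_fun_mul hf hg]
  simp only [ContinuousLinearMap.add_apply, ContinuousLinearMap.coe_smul',
    Pi.smul_apply, smul_eq_mul]
  ring

lemma pd2_const_mul {f : Pt2 → ℝ} {x : Pt2} {i : Fin 2} (c : ℝ) (hf : DifferentiableAt ℝ f x) :
    pd2 i (fun y => c * f y) x = c * pd2 i f x := by
  unfold pd2; rw [fderiv_const_mul hf]; simp

lemma pd2_comm {f : Pt2 → ℝ} {x : Pt2} (i j : Fin 2) (hf : ContDiffAt ℝ (⊤ : ℕ∞) f x) :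
    pd2 i (pd2 j f) x = pd2 j (pd2 i f) x := by
  have hs : IsSymmSndFDerivAt ℝ f x := hf.isSymmSndFDerivAt (by rw [minSmoothness_of_isRCLikeNormedField]; exact WithTop.coe_le_coe.mpr le_top)
  have hd : DifferentiableAt ℝ (fderiv ℝ f) x :=
    (hf.fderiv_right (m := (⊤ : ℕ∞)) (by simp)).differentiableAt (by simp)
  have key : ∀ v w : Pt2, fderiv ℝ (fun y => fderiv ℝ f y w) x v
      = fderiv ℝ (fderiv ℝ f) x v w := by
    intro v w
    rw [fderiv_clm_apply hd (differentiableAt_const _)]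
    simp
  show fderiv ℝ (fun y => fderiv ℝ f y _) x _ = fderiv ℝ (fun y => fderiv ℝ f y _) x _
  rw [key, key, hs]

-- expansion lemmas
lemma ricciT_eq (Γ : Conn) (a b : Fin 2) : ricciT Γ a b = fun y =>
    pd2 0 (Γ 0 a b) y - pd2 a (Γ 0 0 b) y
      + (Γ 0 0 0 y * Γ 0 a b y - Γ 0 a 0 y * Γ 0 0 b y
        + (Γ 0 0 1 y * Γ 1 a b y - Γ 0 a 1 y * Γ 1 0 b y))
    + (pd2 1 (Γ 1 a b) y - pd2 a (Γ 1 1 b) y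
      + (Γ 1 1 0 y * Γ 0 a b y - Γ 1 a 0 y * Γ 0 1 b y
        + (Γ 1 1 1 y * Γ 1 a b y - Γ 1 a 1 y * Γ 1 1 b y))) := by
  funext y
  simp [ricciT, curv, Fin.sum_univ_two]
  ring

lemma lieConn_eq (Γ : Conn) (K : Fin 2 → Pt2 → ℝ) (k a b : Fin 2) :
    lieConn Γ K k a b = fun y =>
      pd2 a (pd2 b (K k)) y
        + (K 0 y * pd2 0 (Γ k a b) y - Γ 0 a b y * pd2 0 (K k) y
            + Γ k a 0 y * pd2 b (K 0) y + Γ k b 0 y * pd2 a (K 0) y)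
        + (K 1 y * pd2 1 (Γ k a b) y - Γ 1 a b y * pd2 1 (K k) y
            + Γ k a 1 y * pd2 b (K 1) y + Γ k b 1 y * pd2 a (K 1) y) := by
  funext y
  simp [lieConn, Fin.sum_univ_two]
  ring

section Expand
variable {U : Set Pt2} (hU : IsOpen U) {Γ : Conn} {K : Fin 2 → Pt2 → ℝ} {x : Pt2}

lemma pd2_ricciT (hd1 : ∀ k i j, DifferentiableAt ℝ (Γ k i j) x)
    (hd2 : ∀ p k i j, DifferentiableAt ℝ (pd2 p (Γ k i j)) x) (p a b : Fin 2) :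
    pd2 p (ricciT Γ a b) x =
      pd2 p (pd2 0 (Γ 0 a b)) x - pd2 p (pd2 a (Γ 0 0 b)) x
      + (pd2 p (Γ 0 0 0) x * Γ 0 a b x + Γ 0 0 0 x * pd2 p (Γ 0 a b) x
      + (- (pd2 p (Γ 0 a 0) x * Γ 0 0 b x + Γ 0 a 0 x * pd2 p (Γ 0 0 b) x)
      + (pd2 p (Γ 0 0 1) x * Γ 1 a b x + Γ 0 0 1 x * pd2 p (Γ 1 a b) x
      + (- (pd2 p (Γ 0 a 1) x * Γ 1 0 b x + Γ 0 a 1 x * pd2 p (Γ 1 0 b) x)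
      + (pd2 p (pd2 1 (Γ 1 a b)) x - pd2 p (pd2 a (Γ 1 1 b)) x
      + (pd2 p (Γ 1 1 0) x * Γ 0 a b x + Γ 1 1 0 x * pd2 p (Γ 0 a b) x
      + (- (pd2 p (Γ 1 a 0) x * Γ 0 1 b x + Γ 1 a 0 x * pd2 p (Γ 0 1 b) x)
      + (pd2 p (Γ 1 1 1) x * Γ 1 a b x + Γ 1 1 1 x * pd2 p (Γ 1 a b) x
      + (- (pd2 p (Γ 1 a 1) x * Γ 1 1 b x + Γ 1 a 1 x * pd2 p (Γ 1 1 b) x)))))))))) := by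
  rw [ricciT_eq]
  simp (disch := apply_rules [DifferentiableAt.mul, DifferentiableAt.add,
    DifferentiableAt.sub, DifferentiableAt.neg, differentiableAt_const]) only
    [pd2_add, pd2_sub, pd2_mul]
  ring

lemma pd2_lieConn (hd1 : ∀ k i j, DifferentiableAt ℝ (Γ k i j) x)
    (hd2 : ∀ p k i j, DifferentiableAt ℝ (pd2 p (Γ k i j)) x)
    (hd3 : ∀ k, DifferentiableAt ℝ (K k) x)
    (hd4 : ∀ p k, DifferentiableAt ℝ (pd2 p (K k)) x)
    (hd5 : ∀ p q k, DifferentiableAt ℝ (pd2 p (pd2 q (K k))) x) (p k a b : Fin 2) :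
    pd2 p (lieConn Γ K k a b) x =
      pd2 p (pd2 a (pd2 b (K k))) x
      + (pd2 p (K 0) x * pd2 0 (Γ k a b) x + K 0 x * pd2 p (pd2 0 (Γ k a b)) x
      + (- (pd2 p (Γ 0 a b) x * pd2 0 (K k) x + Γ 0 a b x * pd2 p (pd2 0 (K k)) x)
      + (pd2 p (Γ k a 0) x * pd2 b (K 0) x + Γ k a 0 x * pd2 p (pd2 b (K 0)) x
      + (pd2 p (Γ k b 0) x * pd2 a (K 0) x + Γ k b 0 x * pd2 p (pd2 a (K 0)) x
      + (pd2 p (K 1) x * pd2 1 (Γ k a b) x + K 1 x * pd2 p (pd2 1 (Γ k a b)) x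
      + (- (pd2 p (Γ 1 a b) x * pd2 1 (K k) x + Γ 1 a b x * pd2 p (pd2 1 (K k)) x)
      + (pd2 p (Γ k a 1) x * pd2 b (K 1) x + Γ k a 1 x * pd2 p (pd2 b (K 1)) x
      + (pd2 p (Γ k b 1) x * pd2 a (K 1) x + Γ k b 1 x * pd2 p (pd2 a (K 1)) x)))))))) := by
  rw [lieConn_eq]
  simp (disch := apply_rules [DifferentiableAt.mul, DifferentiableAt.add,
    DifferentiableAt.sub, DifferentiableAt.neg, differentiableAt_const]) only
    [pd2_add, pd2_sub, pd2_mul]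
  ring

end Expand

set_option maxHeartbeats 2000000 in
lemma lie_ric (U : Set Pt2) (hU : IsOpen U) (Γ : Conn)
    (hΓs : ∀ k i j, ContDiffOn ℝ (⊤ : ℕ∞) (Γ k i j) U)
    (hΓsym : ∀ k i j, ∀ x ∈ U, Γ k i j x = Γ k j i x)
    (K : Fin 2 → Pt2 → ℝ) (hKs : ∀ i, ContDiffOn ℝ (⊤ : ℕ∞) (K i) U)
    (x : Pt2) (hx : x ∈ U) (a b : Fin 2) :
    lieTen2 K (ricciT Γ) a b x
      = (∑ k, pd2 k (lieConn Γ K k a b) x) - (∑ k, pd2 a (lieConn Γ K k k b) x)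
        + ∑ k, ∑ m, (Γ k k m x * lieConn Γ K m a b x - Γ m k b x * lieConn Γ K k a m x
            - Γ k a m x * lieConn Γ K m k b x + Γ m a b x * lieConn Γ K k k m x) := by
  have hΓc : ∀ y ∈ U, ∀ k i j, ContDiffAt ℝ (⊤ : ℕ∞) (Γ k i j) y :=
    fun y hy k i j => (hΓs k i j).contDiffAt (hU.mem_nhds hy)
  have hKc : ∀ y ∈ U, ∀ k, ContDiffAt ℝ (⊤ : ℕ∞) (K k) y :=
    fun y hy k => (hKs k).contDiffAt (hU.mem_nhds hy)
  have cΓ : ∀ k i j, ContDiffAt ℝ (⊤ : ℕ∞) (Γ k i j) x := hΓc x hx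
  have cK : ∀ k, ContDiffAt ℝ (⊤ : ℕ∞) (K k) x := hKc x hx
  have hd1 : ∀ k i j, DifferentiableAt ℝ (Γ k i j) x :=
    fun k i j => (cΓ k i j).differentiableAt (by simp)
  have hd2 : ∀ p k i j, DifferentiableAt ℝ (pd2 p (Γ k i j)) x :=
    fun p k i j => diff_pd2 p (cΓ k i j)
  have hd3 : ∀ k, DifferentiableAt ℝ (K k) x := fun k => (cK k).differentiableAt (by simp)
  have hd4 : ∀ p k, DifferentiableAt ℝ (pd2 p (K k)) x := fun p k => diff_pd2 p (cK k)
  have hd5 : ∀ p q k, DifferentiableAt ℝ (pd2 p (pd2 q (K k))) x :=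
    fun p q k => diff_pd2 p (smooth_pd2 q (cK k))
  have nΓ : ∀ k i j, pd2 1 (pd2 0 (Γ k i j)) x = pd2 0 (pd2 1 (Γ k i j)) x :=
    fun k i j => pd2_comm 1 0 (cΓ k i j)
  have nK2 : ∀ k, pd2 1 (pd2 0 (K k)) x = pd2 0 (pd2 1 (K k)) x :=
    fun k => pd2_comm 1 0 (cK k)
  have nK31 : ∀ q k, pd2 1 (pd2 0 (pd2 q (K k))) x = pd2 0 (pd2 1 (pd2 q (K k))) x :=
    fun q k => pd2_comm 1 0 (smooth_pd2 q (cK k))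
  have nK32 : ∀ p k, pd2 p (pd2 1 (pd2 0 (K k))) x = pd2 p (pd2 0 (pd2 1 (K k))) x :=
    fun p k => pd2_congr p (Filter.eventuallyEq_of_mem (hU.mem_nhds hx)
      (fun y hy => pd2_comm 1 0 (hKc y hy k)))
  have mΓ1 : ∀ k, Γ k 1 0 x = Γ k 0 1 x := fun k => hΓsym k 1 0 x hx
  have mΓU : ∀ y ∈ U, ∀ p k, pd2 p (Γ k 1 0) y = pd2 p (Γ k 0 1) y :=
    fun y hy p k => pd2_congr p (Filter.eventuallyEq_of_mem (hU.mem_nhds hy)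
      (fun z hz => hΓsym k 1 0 z hz))
  have mΓ2 : ∀ p k, pd2 p (Γ k 1 0) x = pd2 p (Γ k 0 1) x := mΓU x hx
  have mΓ3 : ∀ p q k, pd2 p (pd2 q (Γ k 1 0)) x = pd2 p (pd2 q (Γ k 0 1)) x :=
    fun p q k => pd2_congr p (Filter.eventuallyEq_of_mem (hU.mem_nhds hx)
      (fun y hy => mΓU y hy q k))
  have hR := pd2_ricciT hd1 hd2
  have hL := pd2_lieConn hd1 hd2 hd3 hd4 hd5
  fin_cases a <;> fin_cases b <;>
  · simp only [Fin.zero_eta, Fin.mk_one]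
    simp only [lieTen2, Fin.sum_univ_two]
    simp only [hL, hR]
    simp only [ricciT_eq, lieConn_eq]
    simp only [nΓ, nK2, nK31, nK32, mΓ1, mΓ2, mΓ3]
    ring

lemma schouten_eq (Γ : Conn) (a b : Fin 2) :
    schouten Γ a b = fun y => 2/3 * ricciT Γ a b y + 1/3 * ricciT Γ b a y := by
  funext y; simp only [schouten]; ring


set_option maxHeartbeats 2000000

/-- The integrability condition for projective vector fields: if
`ℒ_K Γ^k_{ij} = δ^k_i ρ_j + δ^k_j ρ_i`, then `ℒ_K P_{ij} = −∇_i ρ_j`. -/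
theorem projective_integrability
    (U : Set Pt2) (hUopen : IsOpen U)
    (Γ : Conn) (hΓsmooth : ∀ k i j, ContDiffOn ℝ (⊤ : ℕ∞) (Γ k i j) U)
    (hΓsym : ∀ k i j, ∀ x ∈ U, Γ k i j x = Γ k j i x)
    (K : Fin 2 → Pt2 → ℝ) (hKsmooth : ∀ i, ContDiffOn ℝ (⊤ : ℕ∞) (K i) U)
    (ρ : Fin 2 → Pt2 → ℝ) (hρsmooth : ∀ i, ContDiffOn ℝ (⊤ : ℕ∞) (ρ i) U)
    (hKproj : ∀ k i j, ∀ x ∈ U, lieConn Γ K k i j x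
      = (if k = i then ρ j x else 0) + (if k = j then ρ i x else 0))
    (x : Pt2) (hx : x ∈ U) (i j : Fin 2) :
    lieTen2 K (schouten Γ) i j x = -(pd2 i (ρ j) x - ∑ k, Γ k i j x * ρ k x) := by
  have hxU : U ∈ 𝓝 x := hUopen.mem_nhds hx
  have cΓ : ∀ k i j, ContDiffAt ℝ (⊤ : ℕ∞) (Γ k i j) x :=
    fun k i j => (hΓsmooth k i j).contDiffAt hxU
  have hd1 : ∀ k i j, DifferentiableAt ℝ (Γ k i j) x :=
    fun k i j => (cΓ k i j).differentiableAt (by simp)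
  have hd2 : ∀ p k i j, DifferentiableAt ℝ (pd2 p (Γ k i j)) x :=
    fun p k i j => diff_pd2 p (cΓ k i j)
  have hdρ : ∀ k, DifferentiableAt ℝ (ρ k) x :=
    fun k => ((hρsmooth k).contDiffAt hxU).differentiableAt (by simp)
  have hdRic : ∀ a b, DifferentiableAt ℝ (ricciT Γ a b) x := by
    intro a b
    rw [ricciT_eq]
    apply_rules [DifferentiableAt.mul, DifferentiableAt.add, DifferentiableAt.sub,
      DifferentiableAt.neg]
  have step1 : lieTen2 K (schouten Γ) i j x
      = 2/3 * lieTen2 K (ricciT Γ) i j x + 1/3 * lieTen2 K (ricciT Γ) j i x := by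
    simp only [lieTen2, schouten_eq, Fin.sum_univ_two]
    simp (disch := apply_rules [differentiableAt_const, DifferentiableAt.mul,
      DifferentiableAt.add, DifferentiableAt.const_mul, DifferentiableAt.sub]) only
      [pd2_add, pd2_const_mul]
    ring
  rw [step1, lie_ric U hUopen Γ hΓsmooth hΓsym K hKsmooth x hx i j,
    lie_ric U hUopen Γ hΓsmooth hΓsym K hKsmooth x hx j i]
  have hP : ∀ k a b, lieConn Γ K k a b x
      = (if k = a then ρ b x else 0) + (if k = b then ρ a x else 0) :=
    fun k a b => hKproj k a b x hx
  have hD : ∀ p k a b, pd2 p (lieConn Γ K k a b) x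
      = (if k = a then (1:ℝ) else 0) * pd2 p (ρ b) x
        + (if k = b then (1:ℝ) else 0) * pd2 p (ρ a) x := by
    intro p k a b
    have he : lieConn Γ K k a b =ᶠ[𝓝 x] fun y =>
        (if k = a then (1:ℝ) else 0) * ρ b y + (if k = b then (1:ℝ) else 0) * ρ a y :=
      Filter.eventuallyEq_of_mem hxU (fun y hy => by
        rw [hKproj k a b y hy]; split_ifs <;> simp)
    rw [pd2_congr p he, pd2_add ((hdρ b).const_mul _) ((hdρ a).const_mul _),
      pd2_const_mul _ (hdρ b), pd2_const_mul _ (hdρ a)]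
  have hsym0 : ∀ k, Γ k 1 0 x = Γ k 0 1 x := fun k => hΓsym k 1 0 x hx
  simp only [Fin.sum_univ_two, hP, hD]
  fin_cases i <;> fin_cases j <;> simp [Fin.zero_eta, Fin.mk_one, hsym0] <;> ring
end
end
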